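/- For Borchardt's map M with c₁ > c₂ > c₃ > c₄ > 0, the iterates Mⁿ(c) have all four components converging to a common positive limit. -/
import Mathlib

noncomputable def M (u : ℝ × ℝ × ℝ × ℝ) : ℝ × ℝ × ℝ × ℝ :=
  ((u.1 + u.2.1 + u.2.2.1 + u.2.2.2) / 4,
   (Real.sqrt (u.1 * u.2.1) + Real.sqrt (u.2.2.1 * u.2.2.2)) / 2,
   (Real.sqrt (u.1 * u.2.2.1) + Real.sqrt (u.2.1 * u.2.2.2)) / 2,
   (Real.sqrt (u.1 * u.2.2.2) + Real.sqrt (u.2.1 * u.2.2.1)) / 2)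

def BOrd (u : ℝ × ℝ × ℝ × ℝ) : Prop :=
  0 < u.2.2.2 ∧ u.2.2.2 ≤ u.2.2.1 ∧ u.2.2.1 ≤ u.2.1 ∧ u.2.1 ≤ u.1

lemma key {a b c d : ℝ} (hd : 0 < d) (hdc : d ≤ c) (hcb : c ≤ b) (hba : b ≤ a) :
    BOrd (M (a, b, c, d)) ∧ (M (a, b, c, d)).1 ≤ a ∧ d ≤ (M (a, b, c, d)).2.2.2 ∧
      (M (a, b, c, d)).1 - (M (a, b, c, d)).2.2.2 ≤ (a - d) / 2 := by
  have hd0 : (0:ℝ) ≤ d := hd.le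
  have hc0 : (0:ℝ) ≤ c := hd0.trans hdc
  have hb0 : (0:ℝ) ≤ b := hc0.trans hcb
  have ha0 : (0:ℝ) ≤ a := hb0.trans hba
  have sd := Real.sqrt_pos.mpr hd
  have sdc := Real.sqrt_le_sqrt hdc
  have scb := Real.sqrt_le_sqrt hcb
  have sba := Real.sqrt_le_sqrt hba
  have ea : Real.sqrt a * Real.sqrt a = a := Real.mul_self_sqrt ha0
  have eb : Real.sqrt b * Real.sqrt b = b := Real.mul_self_sqrt hb0
  have ec : Real.sqrt c * Real.sqrt c = c := Real.mul_self_sqrt hc0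
  have ed : Real.sqrt d * Real.sqrt d = d := Real.mul_self_sqrt hd0
  simp only [M, BOrd, Real.sqrt_mul ha0, Real.sqrt_mul hb0, Real.sqrt_mul hc0]
  set sa := Real.sqrt a
  set sb := Real.sqrt b
  set sc := Real.sqrt c
  set sdd := Real.sqrt d
  refine ⟨⟨?_, ?_, ?_, ?_⟩, ?_, ?_, ?_⟩
  · nlinarith [mul_pos (sd.trans_le (sdc.trans (scb.trans sba))) sd, mul_nonneg (Real.sqrt_nonneg b) (Real.sqrt_nonneg c)]
  · nlinarith [mul_nonneg (sub_nonneg.2 sba) (sub_nonneg.2 sdc)]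
  · nlinarith [mul_nonneg (sub_nonneg.2 (sdc.trans (scb.trans sba))) (sub_nonneg.2 scb)]
  · nlinarith [sq_nonneg (sa - sb), sq_nonneg (sc - sdd)]
  · nlinarith [sq_nonneg (sa - sb), sq_nonneg (sa - sc), sq_nonneg (sa - sdd)]
  · nlinarith [mul_le_mul_of_nonneg_left (sdc.trans (scb.trans sba)) sd.le,
      mul_le_mul_of_nonneg_left scb sd.le]
  · have h1 : sb - sc ≤ sa - sdd := by linarith
    have h2 : (0:ℝ) ≤ sb - sc := by linarith
    nlinarith [sq_nonneg (sa - sdd), mul_self_le_mul_self h2 h1, sd.le,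
      mul_nonneg (sub_nonneg.2 (sdc.trans (scb.trans sba))) sd.le]
lemma key' {u : ℝ × ℝ × ℝ × ℝ} (h : BOrd u) :
    BOrd (M u) ∧ (M u).1 ≤ u.1 ∧ u.2.2.2 ≤ (M u).2.2.2 ∧
      (M u).1 - (M u).2.2.2 ≤ (u.1 - u.2.2.2) / 2 := by
  obtain ⟨a, b, c, d⟩ := u
  exact key h.1 h.2.1 h.2.2.1 h.2.2.2

theorem stmt13 (c₁ c₂ c₃ c₄ : ℝ) (h4 : 0 < c₄) (h34 : c₄ < c₃) (h23 : c₃ < c₂)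
    (h12 : c₂ < c₁) :
    ∃ L : ℝ, 0 < L ∧
      Filter.Tendsto (fun n => (M^[n] (c₁, c₂, c₃, c₄)).1) Filter.atTop (nhds L) ∧
      Filter.Tendsto (fun n => (M^[n] (c₁, c₂, c₃, c₄)).2.1) Filter.atTop (nhds L) ∧
      Filter.Tendsto (fun n => (M^[n] (c₁, c₂, c₃, c₄)).2.2.1) Filter.atTop (nhds L) ∧
      Filter.Tendsto (fun n => (M^[n] (c₁, c₂, c₃, c₄)).2.2.2) Filter.atTop (nhds L) := by
  have h0 : BOrd (c₁, c₂, c₃, c₄) := ⟨h4, h34.le, h23.le, h12.le⟩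
  have hOrd : ∀ n, BOrd (M^[n] (c₁, c₂, c₃, c₄)) := by
    intro n
    induction n with
    | zero => simpa using h0
    | succ n ih => rw [Function.iterate_succ_apply']; exact (key' ih).1
  have hAstep : ∀ n, (M^[n+1] (c₁, c₂, c₃, c₄)).1 ≤ (M^[n] (c₁, c₂, c₃, c₄)).1 := by
    intro n; rw [Function.iterate_succ_apply']; exact (key' (hOrd n)).2.1
  have hDstep : ∀ n, (M^[n] (c₁, c₂, c₃, c₄)).2.2.2 ≤ (M^[n+1] (c₁, c₂, c₃, c₄)).2.2.2 := by
    intro n; rw [Function.iterate_succ_apply']; exact (key' (hOrd n)).2.2.1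
  have hD4 : ∀ n, c₄ ≤ (M^[n] (c₁, c₂, c₃, c₄)).2.2.2 := by
    intro n
    induction n with
    | zero => simp
    | succ n ih => exact ih.trans (hDstep n)
  have hDA : ∀ n, (M^[n] (c₁, c₂, c₃, c₄)).2.2.2 ≤ (M^[n] (c₁, c₂, c₃, c₄)).1 := by
    intro n
    obtain ⟨_, h1, h2, h3⟩ := hOrd n
    linarith
  have hgap : ∀ n, (M^[n] (c₁, c₂, c₃, c₄)).1 - (M^[n] (c₁, c₂, c₃, c₄)).2.2.2 ≤
      (c₁ - c₄) * (1/2 : ℝ) ^ n := by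
    intro n
    induction n with
    | zero => simp
    | succ n ih =>
        have h1 : (M^[n+1] (c₁, c₂, c₃, c₄)).1 - (M^[n+1] (c₁, c₂, c₃, c₄)).2.2.2 ≤
            ((M^[n] (c₁, c₂, c₃, c₄)).1 - (M^[n] (c₁, c₂, c₃, c₄)).2.2.2) / 2 := by
          rw [Function.iterate_succ_apply']; exact (key' (hOrd n)).2.2.2
        calc _ ≤ ((M^[n] (c₁, c₂, c₃, c₄)).1 - (M^[n] (c₁, c₂, c₃, c₄)).2.2.2) / 2 := h1
          _ ≤ ((c₁ - c₄) * (1/2 : ℝ) ^ n) / 2 := by linarith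
          _ = (c₁ - c₄) * (1/2 : ℝ) ^ (n + 1) := by ring
  have hAnti : Antitone (fun n => (M^[n] (c₁, c₂, c₃, c₄)).1) :=
    antitone_nat_of_succ_le hAstep
  have hBdd : BddBelow (Set.range fun n => (M^[n] (c₁, c₂, c₃, c₄)).1) := by
    refine ⟨c₄, ?_⟩
    rintro x ⟨n, rfl⟩
    exact (hD4 n).trans (hDA n)
  have hALim := tendsto_atTop_ciInf hAnti hBdd
  set L := ⨅ n, (M^[n] (c₁, c₂, c₃, c₄)).1 with hL
  have hLpos : 0 < L :=
    h4.trans_le (le_ciInf fun n => (hD4 n).trans (hDA n))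
  have hgap0 : Filter.Tendsto
      (fun n => (M^[n] (c₁, c₂, c₃, c₄)).1 - (M^[n] (c₁, c₂, c₃, c₄)).2.2.2)
      Filter.atTop (nhds 0) := by
    refine squeeze_zero (fun n => by linarith [hDA n]) hgap ?_
    simpa using (tendsto_pow_atTop_nhds_zero_of_lt_one (by norm_num)
      (by norm_num : (1/2 : ℝ) < 1)).const_mul (c₁ - c₄)
  have hDLim : Filter.Tendsto (fun n => (M^[n] (c₁, c₂, c₃, c₄)).2.2.2)
      Filter.atTop (nhds L) := by
    have := hALim.sub hgap0
    simpa using this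
  refine ⟨L, hLpos, hALim, ?_, ?_, hDLim⟩
  · refine tendsto_of_tendsto_of_tendsto_of_le_of_le hDLim hALim (fun n => ?_) (fun n => ?_)
    · obtain ⟨_, h1, h2, _⟩ := hOrd n; linarith
    · exact (hOrd n).2.2.2
  · refine tendsto_of_tendsto_of_tendsto_of_le_of_le hDLim hALim (fun n => ?_) (fun n => ?_)
    · exact (hOrd n).2.1
    · obtain ⟨_, _, h2, h3⟩ := hOrd n; linarith
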